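/- arXiv:1311.4065 — 4 statements merged into one kernel-verified Lean document; each statement's English description precedes it below -/
import Mathlib

section
/- Let 0 < θ < 1/2 and set K₁(θ) := (2θ)^{-2θ}(1 − 2θ)^{θ−1}. Let g, h ∈ L²(ℝ₊) with ‖g‖_{L²} = ‖h‖_{L²}, A := ‖x^θ g(x)‖_{L²(ℝ₊)} < ∞ and B := ‖t^θ h(t)‖_{L²(ℝ₊)} < ∞. If for every r > 0 one has ∫_{[0,r)} |h(t)|² dt ≤ K₁(θ)² r^{2θ} A², then ‖g‖_{L²}² ≤ 2 K₁(θ) A B. -/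
/-! Split `‖h‖² = ‖g‖²` at `r`: the hypothesis bounds the part on `[0, r)` by `K² r^{2θ} A²`, and
Chebyshev's inequality bounds the tail by `r^{-2θ} B²`. Writing `s = r^{2θ}`, the sum
`K² A² s + B² / s` has minimum `2 K A B` over `s > 0` (AM–GM). -/

open MeasureTheory Set Filter
open scoped ENNReal NNReal

noncomputable section

/-- The `j`-th binary digit of `x ∈ ℝ₊` in the expansion `x = ∑ x_j 2^{-j-1}`
    terminating in 0's for dyadic rationals. -/
def dDigit (x : ℝ) (j : ℤ) : ℕ := (⌊x * 2 ^ (j + 1)⌋).toNat % 2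

/-- The dyadic sum `x ⊕ y`. -/
def dSum (x y : ℝ) : ℝ := ∑' j : ℤ, |(dDigit x j : ℝ) - (dDigit y j : ℝ)| * 2 ^ (-j - 1)

/-- The Walsh character `w(t,x) = (-1)^{∑ t_j x_{-j-1}}`. -/
def walsh (t x : ℝ) : ℝ := (-1 : ℝ) ^ (∑' j : ℤ, dDigit t j * dDigit x (-j - 1))

/-- Lebesgue measure on `ℝ₊ = [0,∞)`. -/
def μplus : Measure ℝ := volume.restrict (Set.Ici 0)

/-- The Walsh–Fourier transform, as a pointwise integral (defined for `f ∈ L¹(ℝ₊)`). -/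
def WFT (f : ℝ → ℂ) (t : ℝ) : ℂ := ∫ x, f x * (walsh t x : ℂ) ∂μplus

/-- numerator of `V(f)`:  `inf_{x̃ ∈ ℝ₊} ∫_{ℝ₊} (x ⊕ x̃)² |f(x)|² dx`. -/
def Vnum (f : ℝ → ℂ) : ℝ≥0∞ :=
  ⨅ xt ∈ Set.Ici (0:ℝ), ∫⁻ x, ENNReal.ofReal ((dSum x xt) ^ 2) * (‖f x‖₊ : ℝ≥0∞) ^ 2 ∂μplus

/-- `V(f) = ‖f‖₂⁻² · inf_{x̃} ∫ (x ⊕ x̃)² |f(x)|² dx`. -/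
def Vfun (f : ℝ → ℂ) : ℝ≥0∞ := Vnum f / ∫⁻ x, (‖f x‖₊ : ℝ≥0∞) ^ 2 ∂μplus

/-- `fhat` is the Walsh–Fourier transform of `f ∈ L²(ℝ₊)` in the sense of the
    unitary `L²` extension: the transforms of the integrable truncations
    `f·χ_{[0,n)}` converge to `fhat` in `L²(ℝ₊)`. -/
def IsL2WFT (f fhat : ℝ → ℂ) : Prop :=
  Tendsto (fun n : ℕ =>
      eLpNorm (fun t => WFT (Set.indicator (Set.Ico (0:ℝ) (n:ℝ)) f) t - fhat t) 2 μplus)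
    atTop (nhds 0)

open Topology

theorem le_two_mul_of_forall_le_sq_mul_add_sq_div {u v N : ℝ} (hu : 0 ≤ u) (hv : 0 ≤ v)
    (h : ∀ s > 0, N ≤ u ^ 2 * s + v ^ 2 / s) : N ≤ 2 * u * v := by
  have hε : ∀ ε > 0, N ≤ 2 * u * v + ε * (u + v) := by
    intro ε hε
    have hu' : 0 < u + ε := by positivity
    have hv' : 0 < v + ε := by positivity
    -- the AM–GM minimiser `s = v / u`, perturbed so that `u = 0` and `v = 0` need no separate case
    calc N ≤ u ^ 2 * ((v + ε) / (u + ε)) + v ^ 2 / ((v + ε) / (u + ε)) := h _ (by positivity)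
      _ ≤ 2 * u * v + ε * (u + v) := by
        rw [div_div_eq_mul_div, ← mul_div_assoc, div_add_div _ _ hu'.ne' hv'.ne',
          div_le_iff₀ (by positivity)]
        nlinarith [mul_nonneg (mul_nonneg hu (sq_nonneg (v + ε))) hε.le,
          mul_nonneg (mul_nonneg hv (sq_nonneg (u + ε))) hε.le]
  have hlim : Tendsto (fun ε : ℝ => 2 * u * v + ε * (u + v)) (𝓝[>] 0) (𝓝 (2 * u * v)) :=
    tendsto_nhdsWithin_of_tendsto_nhds <| by
      have hc : Continuous fun ε : ℝ => 2 * u * v + ε * (u + v) := by fun_prop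
      simpa using hc.tendsto 0
  exact ge_of_tendsto hlim (eventually_nhdsWithin_of_forall hε)

theorem setLIntegral_Ici_le_rpow_neg_mul {μ : Measure ℝ} {f : ℝ → ℝ≥0∞} {p r : ℝ} (hp : 0 ≤ p)
    (hr : 0 < r) :
    ∫⁻ t in Ici r, f t ∂μ ≤ ENNReal.ofReal (r ^ (-p)) * ∫⁻ t, ENNReal.ofReal (t ^ p) * f t ∂μ := by
  calc ∫⁻ t in Ici r, f t ∂μ
      ≤ ∫⁻ t in Ici r, ENNReal.ofReal (r ^ (-p)) * (ENNReal.ofReal (t ^ p) * f t) ∂μ := by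
        refine setLIntegral_mono' measurableSet_Ici fun t (ht : r ≤ t) => ?_
        rw [← mul_assoc, ← ENNReal.ofReal_mul (by positivity)]
        refine le_mul_of_one_le_left zero_le (ENNReal.one_le_ofReal.2 ?_)
        rw [Real.rpow_neg hr.le, inv_mul_eq_div, one_le_div (by positivity)]
        exact Real.rpow_le_rpow hr.le ht hp
    _ = ENNReal.ofReal (r ^ (-p)) * ∫⁻ t in Ici r, ENNReal.ofReal (t ^ p) * f t ∂μ :=
        lintegral_const_mul' _ _ ENNReal.ofReal_ne_top
    _ ≤ _ := by gcongr; exact Measure.restrict_le_self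

theorem lintegral_μplus_eq_Ico_add_Ici (f : ℝ → ℝ≥0∞) (r : ℝ) :
    ∫⁻ t, f t ∂μplus = (∫⁻ t in Ico 0 r, f t) + ∫⁻ t in Ici r, f t ∂μplus := by
  rw [μplus, ← lintegral_add_compl _ (measurableSet_Iio (a := r)), compl_Iio,
    Measure.restrict_restrict measurableSet_Iio, Iio_inter_Ici]

theorem le_ofReal_two_mul_rpow_mul_rpow {N A B : ℝ≥0∞} {c p : ℝ} (hc : 0 ≤ c) (hp : p ≠ 0)
    (hA : A ≠ ∞) (hB : B ≠ ∞)
    (h : ∀ r > 0, N ≤ ENNReal.ofReal (c ^ 2 * r ^ p) * A + ENNReal.ofReal (r ^ (-p)) * B) :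
    N ≤ ENNReal.ofReal (2 * c) * A ^ (1 / 2 : ℝ) * B ^ (1 / 2 : ℝ) := by
  obtain ⟨a, ha, rfl⟩ : ∃ a, 0 ≤ a ∧ A = ENNReal.ofReal a :=
    ⟨A.toReal, ENNReal.toReal_nonneg, (ENNReal.ofReal_toReal hA).symm⟩
  obtain ⟨b, hb, rfl⟩ : ∃ b, 0 ≤ b ∧ B = ENNReal.ofReal b :=
    ⟨B.toReal, ENNReal.toReal_nonneg, (ENNReal.ofReal_toReal hB).symm⟩
  have hbound : ∀ s > 0, N ≤ ENNReal.ofReal ((c * √a) ^ 2 * s + √b ^ 2 / s) := by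
    intro s hs
    have hr : (s ^ p⁻¹) ^ p = s := Real.rpow_inv_rpow hs.le hp
    calc N ≤ ENNReal.ofReal (c ^ 2 * (s ^ p⁻¹) ^ p) * ENNReal.ofReal a +
          ENNReal.ofReal ((s ^ p⁻¹) ^ (-p)) * ENNReal.ofReal b := h _ (by positivity)
      _ = _ := by
        rw [Real.rpow_neg (by positivity), hr, ← ENNReal.ofReal_mul (by positivity),
          ← ENNReal.ofReal_mul (by positivity), ← ENNReal.ofReal_add (by positivity) (by positivity),
          mul_pow, Real.sq_sqrt ha, Real.sq_sqrt hb]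
        ring_nf
  have hN : N ≠ ∞ := ne_top_of_le_ne_top ENNReal.ofReal_ne_top (hbound 1 one_pos)
  rw [← ENNReal.ofReal_toReal hN, ENNReal.ofReal_rpow_of_nonneg ha (by norm_num),
    ENNReal.ofReal_rpow_of_nonneg hb (by norm_num), ← Real.sqrt_eq_rpow, ← Real.sqrt_eq_rpow,
    ← ENNReal.ofReal_mul (by positivity), ← ENNReal.ofReal_mul (by positivity)]
  refine ENNReal.ofReal_le_ofReal ((le_two_mul_of_forall_le_sq_mul_add_sq_div (by positivity)
    (Real.sqrt_nonneg b) fun s hs =>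
      ENNReal.toReal_le_of_le_ofReal (by positivity) (hbound s hs)).trans_eq (by ring))

theorem stmt3_general (θ : ℝ) (hθ0 : 0 < θ) (hθ : θ < 1/2)
    (g h : ℝ → ℂ)
    (hnorm : (∫⁻ x, (‖g x‖₊ : ℝ≥0∞) ^ 2 ∂μplus) = ∫⁻ t, (‖h t‖₊ : ℝ≥0∞) ^ 2 ∂μplus)
    (hA : (∫⁻ x, ENNReal.ofReal (x ^ (2*θ)) * (‖g x‖₊ : ℝ≥0∞) ^ 2 ∂μplus) ≠ ∞)
    (hB : (∫⁻ t, ENNReal.ofReal (t ^ (2*θ)) * (‖h t‖₊ : ℝ≥0∞) ^ 2 ∂μplus) ≠ ∞)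
    (hyp : ∀ r : ℝ, 0 < r →
      (∫⁻ t in Set.Ico (0:ℝ) r, (‖h t‖₊ : ℝ≥0∞) ^ 2) ≤
        ENNReal.ofReal (((2*θ) ^ (-(2*θ)) * (1 - 2*θ) ^ (θ - 1)) ^ 2 * r ^ (2*θ)) *
          (∫⁻ x, ENNReal.ofReal (x ^ (2*θ)) * (‖g x‖₊ : ℝ≥0∞) ^ 2 ∂μplus)) :
    (∫⁻ x, (‖g x‖₊ : ℝ≥0∞) ^ 2 ∂μplus) ≤
      ENNReal.ofReal (2 * ((2*θ) ^ (-(2*θ)) * (1 - 2*θ) ^ (θ - 1))) *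
        (∫⁻ x, ENNReal.ofReal (x ^ (2*θ)) * (‖g x‖₊ : ℝ≥0∞) ^ 2 ∂μplus) ^ ((1:ℝ)/2) *
        (∫⁻ t, ENNReal.ofReal (t ^ (2*θ)) * (‖h t‖₊ : ℝ≥0∞) ^ 2 ∂μplus) ^ ((1:ℝ)/2) := by
  have hp : 0 < 2 * θ := by linarith
  refine le_ofReal_two_mul_rpow_mul_rpow
    (mul_nonneg (Real.rpow_nonneg hp.le _) (Real.rpow_nonneg (by linarith) _)) hp.ne' hA hB
    fun r hr => ?_
  rw [hnorm, lintegral_μplus_eq_Ico_add_Ici _ r]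
  exact add_le_add (hyp r hr) (setLIntegral_Ici_le_rpow_neg_mul hp.le hr)

/-- real-variable lemma. With `K₁(θ) = (2θ)^{-2θ}(1-2θ)^{θ-1}`, if
`g, h ∈ L²(ℝ₊)` have equal `L²` norms, finite moments `A = ‖x^θ g‖₂`, `B = ‖t^θ h‖₂`, and
`∫_{[0,r)} |h|² ≤ K₁(θ)² r^{2θ} A²` for all `r > 0`, then `‖g‖₂² ≤ 2 K₁(θ) A B`. -/
theorem stmt3 (θ : ℝ) (hθ0 : 0 < θ) (hθ : θ < 1/2)
    (g h : ℝ → ℂ) (hg : MemLp g 2 μplus) (hh : MemLp h 2 μplus)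
    (hnorm : (∫⁻ x, (‖g x‖₊ : ℝ≥0∞) ^ 2 ∂μplus) = ∫⁻ t, (‖h t‖₊ : ℝ≥0∞) ^ 2 ∂μplus)
    (hA : (∫⁻ x, ENNReal.ofReal (x ^ (2*θ)) * (‖g x‖₊ : ℝ≥0∞) ^ 2 ∂μplus) ≠ ∞)
    (hB : (∫⁻ t, ENNReal.ofReal (t ^ (2*θ)) * (‖h t‖₊ : ℝ≥0∞) ^ 2 ∂μplus) ≠ ∞)
    (hyp : ∀ r : ℝ, 0 < r →
      (∫⁻ t in Set.Ico (0:ℝ) r, (‖h t‖₊ : ℝ≥0∞) ^ 2) ≤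
        ENNReal.ofReal (((2*θ) ^ (-(2*θ)) * (1 - 2*θ) ^ (θ - 1)) ^ 2 * r ^ (2*θ)) *
          (∫⁻ x, ENNReal.ofReal (x ^ (2*θ)) * (‖g x‖₊ : ℝ≥0∞) ^ 2 ∂μplus)) :
    (∫⁻ x, (‖g x‖₊ : ℝ≥0∞) ^ 2 ∂μplus) ≤
      ENNReal.ofReal (2 * ((2*θ) ^ (-(2*θ)) * (1 - 2*θ) ^ (θ - 1))) *
        (∫⁻ x, ENNReal.ofReal (x ^ (2*θ)) * (‖g x‖₊ : ℝ≥0∞) ^ 2 ∂μplus) ^ ((1:ℝ)/2) *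
        (∫⁻ t, ENNReal.ofReal (t ^ (2*θ)) * (‖h t‖₊ : ℝ≥0∞) ^ 2 ∂μplus) ^ ((1:ℝ)/2) :=
  stmt3_general θ hθ0 hθ g h hnorm hA hB hyp
end
end

section
/- Let n ∈ ℕ, b₀, …, b_{2ⁿ−1} ∈ ℝ, and f(x) := ∑_{k=0}^{2ⁿ−1} b_k χ_{[k 2^{-n}, (k+1) 2^{-n})}(x). Then for every k₀ ∈ {0, …, 2ⁿ−1} and every x̃ ∈ [k₀ 2^{-n}, (k₀+1) 2^{-n}), one has ∫_{ℝ₊} (x ⊕ x̃)² |f(x)|² dx = 2^{-3n} ∑_{k=0}^{2ⁿ−1} b_{k XOR k₀}² · (3k² + 3k + 1)/3, where k XOR k₀ denotes bitwise XOR of natural numbers. -/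
open MeasureTheory Set Filter
open scoped ENNReal NNReal

noncomputable section

/-!
If `x, y ∈ [0, 1)` lie in the level-`N` dyadic intervals with indices `c` and `t`, the first `N`
binary digits of `x ⊕ y` are those of `c XOR t`, so `x ⊕ y` lies in the closure of the level-`N`
interval with index `c XOR t`. For fixed `x̃ ∈ I_{k₀}` the map `x ↦ x ⊕ x̃` therefore permutes, at
every level `N ≥ n`, the level-`N` pieces of `I_k` onto those of `I_{k XOR k₀}`, up to boundary
points. Counting pieces pins the distribution functions of its image measure and of Lebesgue
measure on `I_{k XOR k₀}` to within `2^{-N}` of each other, so `x ↦ x ⊕ x̃` maps Lebesgue measure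
on `I_k` to Lebesgue measure on `I_{k XOR k₀}`. As the `I_k` are disjoint, `|f|² = ∑ b_k² χ_{I_k}`,
and the integral becomes `∑ b_k² ∫_{I_m} y² dy = 2^{-3n} ∑ b_k² ((m+1)³ - m³)/3`, `m = k XOR k₀`.
-/

open scoped Finset

def dyadicIco (N c : ℕ) : Set ℝ :=
  Ico ((c : ℝ) * 2 ^ (-(N : ℤ))) (((c : ℝ) + 1) * 2 ^ (-(N : ℤ)))

def dyadicChildren (n k N : ℕ) : Finset ℕ :=
  {c ∈ Finset.range ((k + 1) * 2 ^ (N - n)) | c / 2 ^ (N - n) = k}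

section Dyadic

open Function

variable {n k N c : ℕ} {x : ℝ}

lemma mem_dyadicIco_iff : x ∈ dyadicIco N c ↔ 0 ≤ x ∧ ⌊x * 2 ^ N⌋₊ = c := by
  have h2 : (0 : ℝ) < 2 ^ N := by positivity
  simp only [dyadicIco, mem_Ico, zpow_neg, zpow_natCast, ← div_eq_mul_inv, div_le_iff₀ h2,
    lt_div_iff₀ h2]
  constructor
  · rintro ⟨hc, hc'⟩
    have hx : 0 ≤ x := nonneg_of_mul_nonneg_left ((Nat.cast_nonneg c).trans hc) h2
    exact ⟨hx, (Nat.floor_eq_iff (by positivity)).2 ⟨hc, hc'⟩⟩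
  · rintro ⟨hx, rfl⟩
    exact (Nat.floor_eq_iff (by positivity)).1 rfl

lemma measurableSet_dyadicIco : MeasurableSet (dyadicIco N c) := measurableSet_Ico

lemma floor_mul_two_pow_div {M : ℕ} (h : M ≤ N) :
    ⌊x * 2 ^ N⌋₊ / 2 ^ (N - M) = ⌊x * 2 ^ M⌋₊ := by
  rw [← Nat.floor_div_natCast, ← pow_sub_mul_pow 2 h]
  push_cast
  field_simp

lemma mem_dyadicChildren : c ∈ dyadicChildren n k N ↔ c / 2 ^ (N - n) = k := by
  simp only [dyadicChildren, Finset.mem_filter, Finset.mem_range, and_iff_right_iff_imp]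
  rintro rfl
  exact Nat.lt_mul_of_div_lt (Nat.lt_succ_self _) (by positivity)

lemma dyadicIco_eq_biUnion (h : n ≤ N) :
    dyadicIco n k = ⋃ c ∈ dyadicChildren n k N, dyadicIco N c := by
  ext x
  simp only [mem_iUnion, mem_dyadicIco_iff, mem_dyadicChildren, exists_prop]
  constructor
  · rintro ⟨hx, rfl⟩
    exact ⟨_, floor_mul_two_pow_div h, hx, rfl⟩
  · rintro ⟨_, rfl, hx, rfl⟩
    exact ⟨hx, (floor_mul_two_pow_div h).symm⟩

lemma dyadicIco_subset_Ico_zero_one (hk : k < 2 ^ n) : dyadicIco n k ⊆ Ico 0 1 := by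
  intro x hx
  obtain ⟨hx0, hxk⟩ := mem_dyadicIco_iff.1 hx
  have h := floor_mul_two_pow_div (x := x) (Nat.zero_le n)
  rw [Nat.sub_zero, hxk, Nat.div_eq_of_lt hk, pow_zero, mul_one, eq_comm, Nat.floor_eq_zero] at h
  exact ⟨hx0, h⟩

lemma pairwise_disjoint_dyadicIco (N : ℕ) : Pairwise (Disjoint on dyadicIco N) :=
  fun _ _ hcd => Set.disjoint_left.2 fun _ hc hd =>
    hcd ((mem_dyadicIco_iff.1 hc).2.symm.trans (mem_dyadicIco_iff.1 hd).2)

lemma measureReal_dyadicIco : volume.real (dyadicIco N c) = 2 ^ (-(N : ℤ)) := by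
  rw [dyadicIco, Real.volume_real_Ico, max_eq_left (by ring_nf; positivity)]
  ring

lemma measureReal_biUnion_dyadicIco (s : Finset ℕ) :
    volume.real (⋃ c ∈ s, dyadicIco N c) = #s * 2 ^ (-(N : ℤ)) := by
  rw [measureReal_biUnion_finset ((pairwise_disjoint_dyadicIco N).set_pairwise _)
    (fun _ _ => measurableSet_dyadicIco) (fun _ _ => measure_Ico_lt_top.ne)]
  simp only [measureReal_dyadicIco, Finset.sum_const, nsmul_eq_mul]

end Dyadic

lemma Finset.card_filter_comp_eq_of_bijOn {α β : Type*} {σ : α → β} {S : Finset α}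
    {T : Finset β} (hσ : Set.BijOn σ S T) (p : β → Prop) [DecidablePred p] :
    #{c ∈ S | p (σ c)} = #{d ∈ T | p d} := by
  refine Set.BijOn.finsetCard_eq σ ?_
  rw [Finset.coe_filter, Finset.coe_filter]
  exact hσ.inter_mapsTo (mapsTo_preimage σ {d | p d}) fun _ h => h.2

lemma card_filter_mul_le_le_card_filter_succ_mul_le_add_one (T : Finset ℕ) {ε : ℝ}
    (hε : 0 < ε) (a : ℝ) :
    #{d ∈ T | ((d : ℕ) : ℝ) * ε ≤ a} ≤ #{d ∈ T | (((d : ℕ) : ℝ) + 1) * ε ≤ a} + 1 := by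
  have hsub : {d ∈ T | ((d : ℕ) : ℝ) * ε ≤ a} ⊆
      {d ∈ T | (((d : ℕ) : ℝ) + 1) * ε ≤ a} ∪
      {d ∈ T | a < (((d : ℕ) : ℝ) + 1) * ε ∧ ((d : ℕ) : ℝ) * ε ≤ a} := by
    intro d
    simp only [Finset.mem_filter, Finset.mem_union]
    intro ⟨hd, hda⟩
    exact (le_or_gt ((d + 1) * ε) a).imp (⟨hd, ·⟩) (⟨hd, ·, hda⟩)
  have hone : #{d ∈ T | a < (((d : ℕ) : ℝ) + 1) * ε ∧ ((d : ℕ) : ℝ) * ε ≤ a} ≤ 1 := by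
    refine Finset.card_le_one.2 fun d hd e he => ?_
    simp only [Finset.mem_filter] at hd he
    have hde : (d : ℝ) < e + 1 := lt_of_mul_lt_mul_right (hd.2.2.trans_lt he.2.1) hε.le
    have hed : (e : ℝ) < d + 1 := lt_of_mul_lt_mul_right (he.2.2.trans_lt hd.2.1) hε.le
    norm_cast at hde hed
    omega
  exact (Finset.card_le_card hsub).trans ((Finset.card_union_le _ _).trans (by omega))

lemma measureReal_preimage_Iic_inter_biUnion_dyadicIco_mem {f : ℝ → ℝ} {N : ℕ}
    {S T : Finset ℕ} {σ : ℕ → ℕ} (hσ : Set.BijOn σ S T)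
    (hf : ∀ c ∈ S, MapsTo f (dyadicIco N c)
      (Icc ((σ c : ℝ) * 2 ^ (-(N : ℤ))) (((σ c : ℝ) + 1) * 2 ^ (-(N : ℤ))))) (a : ℝ) :
    volume.real (f ⁻¹' Iic a ∩ ⋃ c ∈ S, dyadicIco N c) ∈
      Icc ((#{d ∈ T | (((d : ℕ) : ℝ) + 1) * 2 ^ (-(N : ℤ)) ≤ a} : ℝ) * 2 ^ (-(N : ℤ)))
        ((#{d ∈ T | ((d : ℕ) : ℝ) * 2 ^ (-(N : ℤ)) ≤ a} : ℝ) * 2 ^ (-(N : ℤ))) := by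
  have hfin (R : Finset ℕ) : volume (⋃ c ∈ R, dyadicIco N c) ≠ ⊤ :=
    (measure_biUnion_lt_top R.finite_toSet fun _ _ => measure_Ico_lt_top).ne
  rw [← Finset.card_filter_comp_eq_of_bijOn hσ, ← Finset.card_filter_comp_eq_of_bijOn hσ,
    ← measureReal_biUnion_dyadicIco, ← measureReal_biUnion_dyadicIco]
  constructor
  · refine measureReal_mono (fun x hx => ?_) (measure_inter_lt_top_of_right_ne_top (hfin S)).ne
    obtain ⟨c, hc, hxc⟩ := mem_iUnion₂.1 hx
    rw [Finset.mem_filter] at hc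
    exact ⟨(hf c hc.1 hxc).2.trans hc.2, mem_biUnion hc.1 hxc⟩
  · refine measureReal_mono (fun x ⟨hxa, hx⟩ => ?_) (hfin _)
    obtain ⟨c, hc, hxc⟩ := mem_iUnion₂.1 hx
    exact mem_biUnion (Finset.mem_filter.2 ⟨hc, (hf c hc hxc).1.trans hxa⟩) hxc

theorem measurePreserving_of_mapsTo_dyadicIco {f : ℝ → ℝ} (hf : Measurable f) {n k m : ℕ}
    (h : ∀ N ≥ n, ∃ σ : ℕ → ℕ,
      Set.BijOn σ (dyadicChildren n k N) (dyadicChildren n m N) ∧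
      ∀ c ∈ dyadicChildren n k N, MapsTo f (dyadicIco N c)
        (Icc ((σ c : ℝ) * 2 ^ (-(N : ℤ))) (((σ c : ℝ) + 1) * 2 ^ (-(N : ℤ))))) :
    MeasurePreserving f (volume.restrict (dyadicIco n k)) (volume.restrict (dyadicIco n m)) := by
  have : IsFiniteMeasure (volume.restrict (dyadicIco n k)) :=
    isFiniteMeasure_restrict.2 measure_Ico_lt_top.ne
  refine ⟨hf, Measure.ext_of_Iic _ _ fun a => ?_⟩
  rw [Measure.map_apply hf measurableSet_Iic, Measure.restrict_apply (hf measurableSet_Iic),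
    Measure.restrict_apply measurableSet_Iic]
  have hfin {s : Set ℝ} {j : ℕ} : volume (s ∩ dyadicIco n j) ≠ ⊤ :=
    (measure_inter_lt_top_of_right_ne_top measure_Ico_lt_top.ne).ne
  refine (ENNReal.toReal_eq_toReal_iff' hfin hfin).1 (eq_of_forall_dist_le fun ε hε => ?_)
  change dist (volume.real (f ⁻¹' Iic a ∩ dyadicIco n k))
    (volume.real (Iic a ∩ dyadicIco n m)) ≤ ε
  obtain ⟨N, hN⟩ := exists_pow_lt_of_lt_one hε one_half_lt_one
  set M := max N n
  obtain ⟨σ, hσ, hfσ⟩ := h M (le_max_right N n)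
  -- `id` satisfies the hypothesis on `I_m` with `σ = id`, so both measures lie between the same
  -- two counts of level-`M` pieces, and these counts differ by at most one.
  have hV := measureReal_preimage_Iic_inter_biUnion_dyadicIco_mem hσ hfσ a
  have hW := measureReal_preimage_Iic_inter_biUnion_dyadicIco_mem (f := id) (σ := id) (N := M)
    (Set.bijOn_id (dyadicChildren n m M : Set ℕ)) (fun _ _ => Ico_subset_Icc_self) a
  rw [← dyadicIco_eq_biUnion (le_max_right N n)] at hV hW
  rw [preimage_id] at hW
  have hpos : (0 : ℝ) < 2 ^ (-(M : ℤ)) := by positivity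
  have hcard := Nat.cast_le (α := ℝ) |>.2
    (card_filter_mul_le_le_card_filter_succ_mul_le_add_one (dyadicChildren n m M) hpos a)
  push_cast at hcard
  have hsmall : (2 : ℝ) ^ (-(M : ℤ)) ≤ (1 / 2) ^ N := by
    rw [zpow_neg, zpow_natCast, one_div, inv_pow]
    exact inv_anti₀ (by positivity) (pow_le_pow_right₀ one_le_two (le_max_left N n))
  rw [Real.dist_eq, abs_le]
  constructor <;> nlinarith [hV.1, hV.2, hW.1, hW.2]

section Digits

variable {x y : ℝ}

lemma dDigit_natCast (x : ℝ) (i : ℕ) : dDigit x i = ⌊x * 2 ^ (i + 1)⌋₊ % 2 := by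
  rw [dDigit, Int.floor_toNat, ← zpow_natCast]
  push_cast
  rfl

lemma dDigit_of_neg (hx : x ∈ Ico 0 1) {j : ℤ} (hj : j < 0) : dDigit x j = 0 := by
  have h2 : (2 : ℝ) ^ (j + 1) ≤ 1 := zpow_le_one_of_nonpos₀ one_le_two (by omega)
  have : ⌊x * 2 ^ (j + 1)⌋ = 0 :=
    Int.floor_eq_zero_iff.2 ⟨by positivity [hx.1], by nlinarith [hx.1, hx.2]⟩
  simp [dDigit, this]

lemma natCast_xor_mod_two (a b : ℕ) :
    (((a ^^^ b) % 2 : ℕ) : ℝ) = |((a % 2 : ℕ) : ℝ) - ((b % 2 : ℕ) : ℝ)| := by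
  rw [Nat.xor_mod_two_eq]
  rcases Nat.mod_two_eq_zero_or_one a with ha | ha <;>
    rcases Nat.mod_two_eq_zero_or_one b with hb | hb <;> simp [ha, hb, Nat.add_mod]

lemma sum_range_abs_sub_dDigit (hx : x ∈ Ico 0 1) (hy : y ∈ Ico 0 1) (N : ℕ) :
    ∑ i ∈ Finset.range N, |(dDigit x i : ℝ) - dDigit y i| / 2 ^ (i + 1) =
      ((⌊x * 2 ^ N⌋₊ ^^^ ⌊y * 2 ^ N⌋₊ : ℕ) : ℝ) / 2 ^ N := by
  induction N with
  | zero => simp [Nat.floor_eq_zero.2 hx.2, Nat.floor_eq_zero.2 hy.2]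
  | succ N ih =>
    have hfloor (z : ℝ) : ⌊z * 2 ^ (N + 1)⌋₊ / 2 = ⌊z * 2 ^ N⌋₊ := by
      simpa using floor_mul_two_pow_div (x := z) (N.le_succ)
    rw [Finset.sum_range_succ, ih, dDigit_natCast x, dDigit_natCast y, ← natCast_xor_mod_two,
      ← hfloor x, ← hfloor y, ← Nat.xor_div_two_pow (n := 1)]
    set d := ⌊x * 2 ^ (N + 1)⌋₊ ^^^ ⌊y * 2 ^ (N + 1)⌋₊
    conv_rhs => rw [← Nat.div_add_mod d 2]
    push_cast
    field_simp
    ring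

lemma abs_sub_dDigit_le_one (x y : ℝ) (j : ℤ) : |(dDigit x j : ℝ) - dDigit y j| ≤ 1 := by
  have hle (z : ℝ) : (dDigit z j : ℝ) ≤ 1 := by
    exact_mod_cast Nat.le_of_lt_succ (Nat.mod_lt _ two_pos)
  exact abs_sub_le_of_nonneg_of_le (by positivity) (hle x) (by positivity) (hle y)

lemma summable_abs_sub_dDigit (x y : ℝ) :
    Summable fun i : ℕ => |(dDigit x i : ℝ) - dDigit y i| / 2 ^ (i + 1) := by
  refine (summable_geometric_two' 1).of_nonneg_of_le (fun _ => by positivity) fun i => ?_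
  rw [div_div, ← pow_succ']
  gcongr
  exact abs_sub_dDigit_le_one x y i

lemma dSum_eq_tsum (hx : x ∈ Ico 0 1) (hy : y ∈ Ico 0 1) :
    dSum x y = ∑' i : ℕ, |(dDigit x i : ℝ) - dDigit y i| / 2 ^ (i + 1) := by
  have hsupp :
      Function.support (fun j : ℤ => |(dDigit x j : ℝ) - dDigit y j| * 2 ^ (-j - 1)) ⊆
        range ((↑) : ℕ → ℤ) := by
    intro j hj
    by_contra hneg
    have hj0 : j < 0 := by
      by_contra h
      exact hneg ⟨j.toNat, Int.toNat_of_nonneg (not_lt.1 h)⟩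
    simp [dDigit_of_neg hx hj0, dDigit_of_neg hy hj0] at hj
  rw [dSum, ← Nat.cast_injective.tsum_eq hsupp]
  congr 1
  ext i
  rw [div_eq_mul_inv, ← zpow_natCast, ← zpow_neg]
  push_cast
  ring_nf

theorem dSum_mem_Icc (hx : x ∈ Ico 0 1) (hy : y ∈ Ico 0 1) (N : ℕ) :
    dSum x y ∈ Icc (((⌊x * 2 ^ N⌋₊ ^^^ ⌊y * 2 ^ N⌋₊ : ℕ) : ℝ) * 2 ^ (-(N : ℤ)))
      ((((⌊x * 2 ^ N⌋₊ ^^^ ⌊y * 2 ^ N⌋₊ : ℕ) : ℝ) + 1) * 2 ^ (-(N : ℤ))) := by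
  rw [dSum_eq_tsum hx hy, ← (summable_abs_sub_dDigit x y).sum_add_tsum_nat_add N,
    sum_range_abs_sub_dDigit hx hy, zpow_neg, zpow_natCast, add_mul, one_mul, ← div_eq_mul_inv]
  have htail : ∑' i : ℕ, |(dDigit x ↑(i + N) : ℝ) - dDigit y ↑(i + N)| / 2 ^ (i + N + 1) ≤
      (2 ^ N)⁻¹ := by
    calc _ ≤ ∑' i : ℕ, (2 ^ N)⁻¹ / 2 / 2 ^ i := by
          refine ((summable_abs_sub_dDigit x y).comp_injective (add_left_injective N)).tsum_le_tsum
            (fun i => ?_) (summable_geometric_two' _)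
          refine (div_le_div_of_nonneg_right (abs_sub_dDigit_le_one x y _)
            (by positivity)).trans_eq ?_
          rw [pow_succ, pow_add]
          field_simp
      _ = (2 ^ N)⁻¹ := tsum_geometric_two' _
  constructor
  · exact le_add_of_nonneg_right (tsum_nonneg fun _ => by positivity)
  · exact (add_le_add_iff_left _).2 htail

lemma measurable_dDigit (j : ℤ) : Measurable fun x : ℝ => (dDigit x j : ℝ) :=
  (measurable_from_top (f := fun z : ℤ => ((z.toNat % 2 : ℕ) : ℝ))).comp
    (Int.measurable_floor.comp (measurable_id.mul_const _))

lemma measurable_dSum_left (y : ℝ) : Measurable fun x => dSum x y :=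
  Measurable.tsum fun j => (((measurable_dDigit j).sub_const _).abs).mul_const _

end Digits

lemma setIntegral_sq_dyadicIco (n m : ℕ) :
    ∫ y in dyadicIco n m, y ^ 2 =
      2 ^ (-(3 * (n : ℤ))) * ((3 * (m : ℝ) ^ 2 + 3 * m + 1) / 3) := by
  have hle : (m : ℝ) * 2 ^ (-(n : ℤ)) ≤ (m + 1) * 2 ^ (-(n : ℤ)) := by gcongr; linarith
  have h3 : (2 : ℝ) ^ (-(3 * (n : ℤ))) = (2 ^ (-(n : ℤ))) ^ 3 := by
    rw [← zpow_natCast, ← zpow_mul]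
    ring_nf
  rw [dyadicIco, integral_Ico_eq_integral_Ioo, ← integral_Ioc_eq_integral_Ioo,
    ← intervalIntegral.integral_of_le hle, integral_pow, h3]
  field_simp
  ring

lemma Finset.sum_range_two_pow_xor {M : Type*} [AddCommMonoid M] (f : ℕ → M) {n k₀ : ℕ}
    (hk₀ : k₀ < 2 ^ n) :
    ∑ k ∈ Finset.range (2 ^ n), f (k ^^^ k₀) = ∑ k ∈ Finset.range (2 ^ n), f k := by
  have hmem {k : ℕ} (hk : k ∈ Finset.range (2 ^ n)) : k ^^^ k₀ ∈ Finset.range (2 ^ n) :=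
    Finset.mem_range.2 (Nat.xor_lt_two_pow (Finset.mem_range.1 hk) hk₀)
  exact Finset.sum_nbij' (· ^^^ k₀) (· ^^^ k₀) (fun _ => hmem) (fun _ => hmem)
    (fun _ _ => xor_cancel_right _ _) (fun _ _ => xor_cancel_right _ _) fun _ _ => rfl

section Indicator

variable {α ι : Type*} {A : ι → Set α} {s : Finset ι}

lemma sq_sum_mul_indicator_one (hA : (s : Set ι).PairwiseDisjoint A) (b : ι → ℝ) (x : α) :
    (∑ k ∈ s, b k * (A k).indicator (fun _ => (1 : ℝ)) x) ^ 2 =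
      ∑ k ∈ s, b k ^ 2 * (A k).indicator (fun _ => (1 : ℝ)) x := by
  by_cases hx : ∃ j ∈ s, x ∈ A j
  · obtain ⟨j, hj, hxj⟩ := hx
    have hzero (f : ι → ℝ) :
        ∀ k ∈ s, k ≠ j → f k * (A k).indicator (fun _ => (1 : ℝ)) x = 0 := fun k hk hkj => by
        rw [indicator_of_notMem fun hxk => (hA hk hj hkj).ne_of_mem hxk hxj rfl, mul_zero]
    rw [Finset.sum_eq_single_of_mem j hj (hzero b), Finset.sum_eq_single_of_mem j hj (hzero _),
      indicator_of_mem hxj, mul_one, mul_one]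
  · push Not at hx
    have hzero (f : ι → ℝ) : ∑ k ∈ s, f k * (A k).indicator (fun _ => (1 : ℝ)) x = 0 :=
      Finset.sum_eq_zero fun k hk => by rw [indicator_of_notMem (hx k hk), mul_zero]
    rw [hzero b, hzero _, zero_pow two_ne_zero]

lemma integral_mul_sq_sum_mul_indicator_one [MeasurableSpace α] {μ : Measure α}
    (hA : (s : Set ι).PairwiseDisjoint A) (hAm : ∀ k ∈ s, MeasurableSet (A k)) {g : α → ℝ}
    (hg : ∀ k ∈ s, IntegrableOn g (A k) μ) (b : ι → ℝ) :
    ∫ x, g x * (∑ k ∈ s, b k * (A k).indicator (fun _ => (1 : ℝ)) x) ^ 2 ∂μ =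
      ∑ k ∈ s, b k ^ 2 * ∫ x in A k, g x ∂μ := by
  have hpt (k : ι) (x : α) :
      g x * (b k ^ 2 * (A k).indicator (fun _ => (1 : ℝ)) x) = b k ^ 2 * (A k).indicator g x := by
    by_cases hx : x ∈ A k <;> simp [hx, mul_comm]
  simp_rw [sq_sum_mul_indicator_one hA, Finset.mul_sum, hpt]
  rw [integral_finsetSum _ fun k hk => ((hg k hk).integrable_indicator (hAm k hk)).const_mul _]
  refine Finset.sum_congr rfl fun k hk => ?_
  rw [integral_const_mul, integral_indicator (hAm k hk)]

end Indicator

lemma μplus_restrict_dyadicIco (n k : ℕ) :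
    μplus.restrict (dyadicIco n k) = volume.restrict (dyadicIco n k) := by
  rw [μplus, Measure.restrict_restrict measurableSet_dyadicIco,
    inter_eq_left.2 fun _ hx => mem_Ici.2 (mem_dyadicIco_iff.1 hx).1]

section DyadicSum

variable {n k k₀ : ℕ} {xt : ℝ}

theorem measurePreserving_dSum_dyadicIco (hk : k < 2 ^ n) (hk₀ : k₀ < 2 ^ n)
    (hxt : xt ∈ dyadicIco n k₀) :
    MeasurePreserving (fun x => dSum x xt) (volume.restrict (dyadicIco n k))
      (volume.restrict (dyadicIco n (k ^^^ k₀))) := by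
  refine measurePreserving_of_mapsTo_dyadicIco (measurable_dSum_left xt) fun N hN =>
    ⟨(· ^^^ ⌊xt * 2 ^ N⌋₊), ?_, fun c hc x hx => ?_⟩
  · have ht : ⌊xt * 2 ^ N⌋₊ / 2 ^ (N - n) = k₀ :=
      (floor_mul_two_pow_div hN).trans (mem_dyadicIco_iff.1 hxt).2
    have hxor {a b : ℕ} (ha : a ∈ dyadicChildren n b N) :
        a ^^^ ⌊xt * 2 ^ N⌋₊ ∈ dyadicChildren n (b ^^^ k₀) N := by
      rw [mem_dyadicChildren] at ha ⊢
      rw [Nat.xor_div_two_pow, ha, ht]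
    have hinv : InvOn (· ^^^ ⌊xt * 2 ^ N⌋₊) (· ^^^ ⌊xt * 2 ^ N⌋₊)
        (dyadicChildren n k N) (dyadicChildren n (k ^^^ k₀) N) :=
      ⟨fun c _ => xor_cancel_right _ _, fun c _ => xor_cancel_right _ _⟩
    refine hinv.bijOn (fun c hc => hxor hc) fun d hd => ?_
    simpa using hxor hd
  · have hx01 := dyadicIco_subset_Ico_zero_one hk
      ((dyadicIco_eq_biUnion hN).symm ▸ mem_biUnion hc hx)
    simpa [(mem_dyadicIco_iff.1 hx).2] using
      dSum_mem_Icc hx01 (dyadicIco_subset_Ico_zero_one hk₀ hxt) N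

lemma integrableOn_dSum_sq_dyadicIco (hk : k < 2 ^ n) (hk₀ : k₀ < 2 ^ n)
    (hxt : xt ∈ dyadicIco n k₀) :
    IntegrableOn (fun x => dSum x xt ^ 2) (dyadicIco n k) μplus := by
  rw [IntegrableOn, μplus_restrict_dyadicIco]
  exact ((measurePreserving_dSum_dyadicIco hk hk₀ hxt).integrable_comp
    (continuous_pow 2).aestronglyMeasurable).2
      ((continuous_pow 2).integrableOn_Icc.mono_set Ico_subset_Icc_self)

lemma setIntegral_dSum_sq_dyadicIco (hk : k < 2 ^ n) (hk₀ : k₀ < 2 ^ n)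
    (hxt : xt ∈ dyadicIco n k₀) :
    ∫ x in dyadicIco n k, dSum x xt ^ 2 ∂μplus = ∫ y in dyadicIco n (k ^^^ k₀), y ^ 2 := by
  have hpres := measurePreserving_dSum_dyadicIco hk hk₀ hxt
  rw [μplus_restrict_dyadicIco, ← hpres.map_eq,
    integral_map hpres.measurable.aemeasurable (continuous_pow 2).aestronglyMeasurable]

end DyadicSum

/-- for the dyadic step function `f = ∑_{k<2ⁿ} b_k χ_{[k2^{-n},(k+1)2^{-n})}`
and any `x̃ ∈ [k₀2^{-n},(k₀+1)2^{-n})`,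
`∫_{ℝ₊} (x ⊕ x̃)² |f(x)|² dx = 2^{-3n} ∑_{k<2ⁿ} b_{k ⊻ k₀}² (3k²+3k+1)/3`. -/
theorem stmt12 (n : ℕ) (b : ℕ → ℝ) (k₀ : ℕ) (hk₀ : k₀ < 2 ^ n) (xt : ℝ)
    (hxt : xt ∈ Set.Ico ((k₀ : ℝ) * 2 ^ (-(n:ℤ))) (((k₀ : ℝ) + 1) * 2 ^ (-(n:ℤ)))) :
    (∫ x, (dSum x xt) ^ 2 *
        (∑ k ∈ Finset.range (2 ^ n), b k *
          Set.indicator (Set.Ico ((k : ℝ) * 2 ^ (-(n:ℤ))) (((k : ℝ) + 1) * 2 ^ (-(n:ℤ))))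
            (fun _ => (1:ℝ)) x) ^ 2 ∂μplus)
      = 2 ^ (-(3 * (n:ℤ))) *
          ∑ k ∈ Finset.range (2 ^ n),
            (b (k ^^^ k₀)) ^ 2 * ((3 * (k : ℝ) ^ 2 + 3 * (k : ℝ) + 1) / 3) := by
  change ∫ x, dSum x xt ^ 2 * (∑ k ∈ Finset.range (2 ^ n),
    b k * (dyadicIco n k).indicator (fun _ => (1 : ℝ)) x) ^ 2 ∂μplus = _
  rw [integral_mul_sq_sum_mul_indicator_one ((pairwise_disjoint_dyadicIco n).set_pairwise _)
    (fun _ _ => measurableSet_dyadicIco)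
    (fun k hk => integrableOn_dSum_sq_dyadicIco (Finset.mem_range.1 hk) hk₀ hxt) b,
    Finset.mul_sum]
  calc _ = ∑ k ∈ Finset.range (2 ^ n), b k ^ 2 * (2 ^ (-(3 * (n : ℤ))) *
        ((3 * ((k ^^^ k₀ : ℕ) : ℝ) ^ 2 + 3 * (k ^^^ k₀ : ℕ) + 1) / 3)) :=
        Finset.sum_congr rfl fun k hk => by
          rw [setIntegral_dSum_sq_dyadicIco (Finset.mem_range.1 hk) hk₀ hxt,
            setIntegral_sq_dyadicIco]
    _ = _ := by
        rw [← Finset.sum_range_two_pow_xor _ hk₀]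
        refine Finset.sum_congr rfl fun k _ => ?_
        rw [xor_cancel_right]
        ring
end
end

section
/- Let f and (f_n)_{n∈ℕ} be bounded measurable functions on ℝ₊ supported in [0,1), with f_n → f uniformly on [0,1). Define V₀(g) := inf_{x̃ ∈ ℝ₊} ∫_{ℝ₊} (x ⊕ x̃)² |g(x)|² dx. Then lim_{n→∞} V₀(f_n) = V₀(f). -/
open MeasureTheory Set Filter
open scoped ENNReal NNReal

noncomputable section

/-!
For `g` supported in `[0,1)` the infimum defining `V₀(g)` may be restricted to `x̃ ∈ [0,1)`,
because `x ⊕ x̃ ≥ 1 ≥ x ⊕ 0` whenever `x < 1 ≤ x̃` (the leading digit of `x̃` is not shared by `x`).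
On `[0,1)²` the weight `(x ⊕ x̃)²` is at most `1` and `[0,1)` has measure `1`, so a pointwise
bound `|g|² ≤ |h|² + c` gives `V₀(g) ≤ V₀(h) + c`. Uniform convergence `fₙ → f` with `f` bounded
makes `|fₙ|² → |f|²` uniformly, and the two-sided estimate yields `V₀(fₙ) → V₀(f)`.
-/

lemma dDigit_le_one (x : ℝ) (j : ℤ) : dDigit x j ≤ 1 :=
  Nat.lt_succ_iff.mp (Nat.mod_lt _ two_pos)

lemma dDigit_eq_zero {x : ℝ} (hx : 0 ≤ x) {j : ℤ} (h : x < 2 ^ (-j - 1)) :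
    dDigit x j = 0 := by
  have hlt : x * 2 ^ (j + 1) < 1 := by
    calc x * 2 ^ (j + 1) < 2 ^ (-j - 1) * 2 ^ (j + 1) := by gcongr
      _ = 1 := by rw [← zpow_add₀ two_ne_zero]; simp
  have : ⌊x * 2 ^ (j + 1)⌋ = 0 := Int.floor_eq_zero_iff.2 ⟨by positivity, hlt⟩
  simp [dDigit, this]

lemma dDigit_eq_zero_of_lt_one {x : ℝ} (hx : 0 ≤ x) (hx1 : x < 1) {j : ℤ} (hj : j < 0) :
    dDigit x j = 0 :=
  dDigit_eq_zero hx (hx1.trans_le (one_le_zpow₀ one_le_two (by omega)))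

lemma dDigit_neg_log_sub_one {y : ℝ} (hy : 0 < y) : dDigit y (-Int.log 2 y - 1) = 1 := by
  set k := Int.log 2 y
  have hlow : (2 : ℝ) ^ k ≤ y := by exact_mod_cast Int.zpow_log_le_self one_lt_two hy
  have hupp : y < (2 : ℝ) ^ (k + 1) := by exact_mod_cast Int.lt_zpow_succ_log_self one_lt_two y
  have hfloor : ⌊y * 2 ^ (-k - 1 + 1)⌋ = 1 := by
    rw [Int.floor_eq_iff, sub_add_cancel, zpow_neg, ← div_eq_mul_inv]
    have h2k : (0 : ℝ) < 2 ^ k := by positivity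
    constructor
    · rw [Int.cast_one, le_div_iff₀ h2k]; linarith
    · rw [zpow_add_one₀ two_ne_zero] at hupp
      rw [div_lt_iff₀ h2k]; push_cast; linarith
  rw [dDigit, hfloor]; rfl

def dTerm (x y : ℝ) (j : ℤ) : ℝ := |(dDigit x j : ℝ) - (dDigit y j : ℝ)| * 2 ^ (-j - 1)

lemma dTerm_nonneg (x y : ℝ) (j : ℤ) : 0 ≤ dTerm x y j := by
  unfold dTerm; positivity

lemma dTerm_le (x y : ℝ) (j : ℤ) : dTerm x y j ≤ 2 ^ (-j - 1) := by
  have hx : (dDigit x j : ℝ) ≤ 1 := by exact_mod_cast dDigit_le_one x j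
  have hy : (dDigit y j : ℝ) ≤ 1 := by exact_mod_cast dDigit_le_one y j
  have hdiff : |(dDigit x j : ℝ) - dDigit y j| ≤ 1 := by
    rw [abs_sub_le_iff]
    constructor <;>
      linarith [Nat.cast_nonneg (α := ℝ) (dDigit x j), Nat.cast_nonneg (α := ℝ) (dDigit y j)]
  exact mul_le_of_le_one_left (by positivity) hdiff

lemma dTerm_eq_zero {x y : ℝ} (hx : 0 ≤ x) (hy : 0 ≤ y) {j : ℤ}
    (hxj : x < 2 ^ (-j - 1)) (hyj : y < 2 ^ (-j - 1)) : dTerm x y j = 0 := by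
  simp [dTerm, dDigit_eq_zero hx hxj, dDigit_eq_zero hy hyj]

lemma summable_dTerm {x y : ℝ} (hx : 0 ≤ x) (hy : 0 ≤ y) : Summable (dTerm x y) := by
  refine Summable.of_nat_of_neg_add_one ?_ ?_
  · refine Summable.of_nonneg_of_le (fun n => dTerm_nonneg x y n) (fun n => ?_)
      (summable_geometric_two' 1)
    refine (dTerm_le x y n).trans_eq ?_
    rw [zpow_sub₀ two_ne_zero, zpow_neg, zpow_natCast]; ring
  · obtain ⟨N, hN⟩ := pow_unbounded_of_one_lt (max x y) one_lt_two
    refine summable_of_ne_finset_zero (s := Finset.range N) fun n hn => ?_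
    have hpow : (2 : ℝ) ^ N ≤ 2 ^ (-(-((n : ℤ) + 1)) - 1) := by
      rw [← zpow_natCast]
      exact zpow_le_zpow_right₀ one_le_two (by simp at hn; omega)
    exact dTerm_eq_zero hx hy ((le_max_left x y).trans_lt (hN.trans_le hpow))
      ((le_max_right x y).trans_lt (hN.trans_le hpow))

lemma dSum_eq_tsum_s13 (x y : ℝ) : dSum x y = ∑' j, dTerm x y j := rfl

lemma dSum_nonneg (x y : ℝ) : 0 ≤ dSum x y := tsum_nonneg (dTerm_nonneg x y)

lemma dSum_le_one {x y : ℝ} (hx : x ∈ Ico (0 : ℝ) 1) (hy : y ∈ Ico (0 : ℝ) 1) :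
    dSum x y ≤ 1 := by
  have hneg : ∀ n : ℕ, dTerm x y (-(n + 1)) = 0 := fun n => by
    rw [dTerm, dDigit_eq_zero_of_lt_one hx.1 hx.2 (by omega),
      dDigit_eq_zero_of_lt_one hy.1 hy.2 (by omega)]
    simp
  have hgeom : ∀ n : ℕ, dTerm x y n ≤ 1 / 2 / 2 ^ n := fun n => by
    refine (dTerm_le x y n).trans_eq ?_
    rw [zpow_sub₀ two_ne_zero, zpow_neg, zpow_natCast]; ring
  have hs := summable_dTerm hx.1 hy.1
  rw [dSum_eq_tsum_s13, tsum_of_nat_of_neg_add_one (hs.comp_injective Nat.cast_injective)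
    (hs.comp_injective fun _ _ h => by simpa using h)]
  simp only [hneg, tsum_zero, add_zero]
  calc ∑' n : ℕ, dTerm x y n ≤ ∑' n : ℕ, (1 / 2 / 2 ^ n : ℝ) :=
        (hs.comp_injective Nat.cast_injective).tsum_le_tsum hgeom (summable_geometric_two' 1)
    _ = 1 := tsum_geometric_two' 1

lemma one_le_dSum {x y : ℝ} (hx : x ∈ Ico (0 : ℝ) 1) (hy : 1 ≤ y) : 1 ≤ dSum x y := by
  set k := Int.log 2 y
  have hk : 0 ≤ k := by simp only [k, Int.log_of_one_le_right 2 hy]; positivity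
  have hterm : dTerm x y (-k - 1) = 2 ^ k := by
    simp [dTerm, dDigit_neg_log_sub_one (one_pos.trans_le hy), k,
      dDigit_eq_zero_of_lt_one hx.1 hx.2 (j := -k - 1) (by omega)]
  calc (1 : ℝ) ≤ 2 ^ k := one_le_zpow₀ one_le_two hk
    _ = dTerm x y (-k - 1) := hterm.symm
    _ ≤ dSum x y := (summable_dTerm hx.1 (zero_le_one.trans hy)).le_tsum _
        fun j _ => dTerm_nonneg x y j

lemma μplus_Ico_zero_one : μplus (Ico (0 : ℝ) 1) = 1 := by
  rw [μplus, Measure.restrict_apply measurableSet_Ico,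
    inter_eq_left.mpr fun _ hx => hx.1, Real.volume_Ico, sub_zero, ENNReal.ofReal_one]

def dMoment (g : ℝ → ℂ) (xt : ℝ) : ℝ≥0∞ :=
  ∫⁻ x, ENNReal.ofReal ((dSum x xt) ^ 2) * (‖g x‖₊ : ℝ≥0∞) ^ 2 ∂μplus

section SupportedInUnitInterval

variable {g h : ℝ → ℂ}

lemma dMoment_le_add (hg : ∀ x ∉ Ico (0 : ℝ) 1, g x = 0) {c : ℝ≥0}
    (hgh : ∀ x, ‖g x‖₊ ^ 2 ≤ ‖h x‖₊ ^ 2 + c) {xt : ℝ} (hxt : xt ∈ Ico (0 : ℝ) 1) :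
    dMoment g xt ≤ dMoment h xt + c := by
  have hpt : ∀ x, ENNReal.ofReal ((dSum x xt) ^ 2) * (‖g x‖₊ : ℝ≥0∞) ^ 2 ≤
      ENNReal.ofReal ((dSum x xt) ^ 2) * (‖h x‖₊ : ℝ≥0∞) ^ 2 +
        (Ico (0 : ℝ) 1).indicator (fun _ => (c : ℝ≥0∞)) x := by
    intro x
    by_cases hx : x ∈ Ico (0 : ℝ) 1
    · have hw : ENNReal.ofReal ((dSum x xt) ^ 2) ≤ 1 :=
        ENNReal.ofReal_le_one.2 (pow_le_one₀ (dSum_nonneg x xt) (dSum_le_one hx hxt))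
      have hghx : (‖g x‖₊ : ℝ≥0∞) ^ 2 ≤ (‖h x‖₊ : ℝ≥0∞) ^ 2 + c := by exact_mod_cast hgh x
      calc ENNReal.ofReal ((dSum x xt) ^ 2) * (‖g x‖₊ : ℝ≥0∞) ^ 2
          ≤ ENNReal.ofReal ((dSum x xt) ^ 2) * ((‖h x‖₊ : ℝ≥0∞) ^ 2 + c) := by gcongr
        _ ≤ ENNReal.ofReal ((dSum x xt) ^ 2) * (‖h x‖₊ : ℝ≥0∞) ^ 2 + c := by
          rw [mul_add]; gcongr; exact mul_le_of_le_one_left' hw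
        _ = _ := by rw [indicator_of_mem hx]
    · simp [hg x hx]
  calc dMoment g xt ≤ ∫⁻ x, ENNReal.ofReal ((dSum x xt) ^ 2) * (‖h x‖₊ : ℝ≥0∞) ^ 2 +
        (Ico (0 : ℝ) 1).indicator (fun _ => (c : ℝ≥0∞)) x ∂μplus := lintegral_mono hpt
    _ = dMoment h xt + c := by
      rw [lintegral_add_right _ (measurable_const.indicator measurableSet_Ico),
        lintegral_indicator_const measurableSet_Ico, μplus_Ico_zero_one, mul_one, dMoment]

lemma dMoment_zero_le (hg : ∀ x ∉ Ico (0 : ℝ) 1, g x = 0) {xt : ℝ} (hxt : 1 ≤ xt) :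
    dMoment g 0 ≤ dMoment g xt := by
  refine lintegral_mono fun x => ?_
  by_cases hx : x ∈ Ico (0 : ℝ) 1
  · have hle := (dSum_le_one hx (left_mem_Ico.2 one_pos)).trans (one_le_dSum hx hxt)
    gcongr
    exact dSum_nonneg x 0
  · simp [hg x hx]

/-- Every `x̃ ≥ 1` is beaten by `x̃ = 0`, as `x ⊕ 0 ≤ 1 ≤ x ⊕ x̃` for `x ∈ [0,1)`. -/
lemma Vnum_eq_iInf_Ico (hg : ∀ x ∉ Ico (0 : ℝ) 1, g x = 0) :
    Vnum g = ⨅ xt ∈ Ico (0 : ℝ) 1, dMoment g xt := by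
  refine le_antisymm (biInf_mono fun _ hxt => hxt.1) (le_iInf₂ fun xt hxt => ?_)
  rcases lt_or_ge xt 1 with hlt | hge
  · exact biInf_le _ ⟨hxt, hlt⟩
  · exact (biInf_le _ (left_mem_Ico.2 one_pos)).trans (dMoment_zero_le hg hge)

lemma Vnum_le_add (hg : ∀ x ∉ Ico (0 : ℝ) 1, g x = 0) (hh : ∀ x ∉ Ico (0 : ℝ) 1, h x = 0)
    {c : ℝ≥0} (hgh : ∀ x, ‖g x‖₊ ^ 2 ≤ ‖h x‖₊ ^ 2 + c) : Vnum g ≤ Vnum h + c := by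
  rw [Vnum_eq_iInf_Ico hg, Vnum_eq_iInf_Ico hh]
  simp only [ENNReal.iInf_add]
  exact iInf₂_mono fun xt hxt => dMoment_le_add hg hgh hxt

end SupportedInUnitInterval

lemma ENNReal.tendsto_nhds_of_le_add {α : Type*} {l : Filter α} {u : α → ℝ≥0∞} {a : ℝ≥0∞}
    (h : ∀ η : ℝ≥0, 0 < η → ∀ᶠ i in l, a ≤ u i + η ∧ u i ≤ a + η) : Tendsto u l (nhds a) := by
  refine ENNReal.tendsto_nhds_of_Icc fun ε hε => ?_
  obtain ⟨η, hη0, hηε⟩ := ENNReal.lt_iff_exists_nnreal_btwn.1 hε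
  filter_upwards [h η (by exact_mod_cast hη0)] with i hi
  exact ⟨tsub_le_iff_right.2 (hi.1.trans (by gcongr)), hi.2.trans (by gcongr)⟩

lemma NNReal.le_add_of_dist_lt {a b η : ℝ≥0} (h : dist a b < η) : a ≤ b + η := by
  rw [NNReal.dist_eq] at h
  rw [← NNReal.coe_le_coe, NNReal.coe_add]
  linarith [(abs_sub_lt_iff.1 h).1]

lemma TendstoUniformlyOn.tendstoUniformly_of_eqOn_compl {α β ι : Type*} [UniformSpace β]
    {l : Filter ι} {F : ι → α → β} {f : α → β} {s : Set α} (h : TendstoUniformlyOn F f l s)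
    (hF : ∀ i, ∀ x ∉ s, F i x = f x) : TendstoUniformly F f l := fun u hu => by
  filter_upwards [h u hu] with i hi x
  by_cases hx : x ∈ s
  · exact hi x hx
  · rw [hF i x hx]; exact refl_mem_uniformity hu

lemma Continuous.comp_tendstoUniformly_of_norm_le {α β ι E : Type*} [UniformSpace β]
    [NormedAddCommGroup E] [ProperSpace E] {l : Filter ι} {F : ι → α → E} {f : α → E}
    {g : E → β} {M : ℝ} (hg : Continuous g) (hf : ∀ x, ‖f x‖ ≤ M) (h : TendstoUniformly F f l) :
    TendstoUniformly (fun i x => g (F i x)) (fun x => g (f x)) l := by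
  have hball : ∀ z : E, ‖z‖ ≤ M + 1 → z ∈ Metric.closedBall 0 (M + 1) := fun z hz => by
    rwa [mem_closedBall_zero_iff]
  refine ((isCompact_closedBall 0 (M + 1)).uniformContinuousOn_of_continuous
    hg.continuousOn).comp_tendstoUniformly_eventually ?_ (fun x => hball _ (by linarith [hf x])) h
  filter_upwards [Metric.tendstoUniformly_iff.1 h 1 one_pos] with i hi x
  refine hball _ ?_
  have hdist := hi x
  rw [dist_eq_norm'] at hdist
  linarith [norm_le_norm_add_norm_sub' (F i x) (f x), hf x]

theorem stmt13_general (f : ℝ → ℂ) (fn : ℕ → ℝ → ℂ)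
    (hfb : ∃ M : ℝ, ∀ x, ‖f x‖ ≤ M)
    (hsupp : ∀ x ∉ Set.Ico (0:ℝ) 1, f x = 0)
    (hsuppn : ∀ n, ∀ x ∉ Set.Ico (0:ℝ) 1, fn n x = 0)
    (hunif : TendstoUniformlyOn fn f atTop (Set.Ico (0:ℝ) 1)) :
    Tendsto (fun n => ⨅ xt ∈ Set.Ici (0:ℝ),
        ∫⁻ x, ENNReal.ofReal ((dSum x xt) ^ 2) * (‖fn n x‖₊ : ℝ≥0∞) ^ 2 ∂μplus)
      atTop (nhds (⨅ xt ∈ Set.Ici (0:ℝ),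
        ∫⁻ x, ENNReal.ofReal ((dSum x xt) ^ 2) * (‖f x‖₊ : ℝ≥0∞) ^ 2 ∂μplus)) := by
  change Tendsto (fun n => Vnum (fn n)) atTop (nhds (Vnum f))
  obtain ⟨M, hM⟩ := hfb
  have hsq : TendstoUniformly (fun n x => ‖fn n x‖₊ ^ 2) (fun x => ‖f x‖₊ ^ 2) atTop :=
    (continuous_nnnorm.pow 2).comp_tendstoUniformly_of_norm_le hM
      (hunif.tendstoUniformly_of_eqOn_compl fun n x hx => (hsuppn n x hx).trans (hsupp x hx).symm)
  refine ENNReal.tendsto_nhds_of_le_add fun η hη => ?_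
  filter_upwards [Metric.tendstoUniformly_iff.1 hsq η (by exact_mod_cast hη)] with n hn
  exact ⟨Vnum_le_add hsupp (hsuppn n) fun x => NNReal.le_add_of_dist_lt (hn x),
    Vnum_le_add (hsuppn n) hsupp fun x =>
      NNReal.le_add_of_dist_lt ((dist_comm _ _).trans_lt (hn x))⟩

/-- if `f` and the `fₙ` are bounded measurable functions supported in `[0,1)`
and `fₙ → f` uniformly on `[0,1)`, then
`V₀(fₙ) = inf_{x̃∈ℝ₊} ∫ (x ⊕ x̃)² |fₙ|² → V₀(f)`. -/
theorem stmt13 (f : ℝ → ℂ) (fn : ℕ → ℝ → ℂ)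
    (hfm : Measurable f) (hfnm : ∀ n, Measurable (fn n))
    (hfb : ∃ M : ℝ, ∀ x, ‖f x‖ ≤ M) (hfnb : ∀ n, ∃ M : ℝ, ∀ x, ‖fn n x‖ ≤ M)
    (hsupp : ∀ x ∉ Set.Ico (0:ℝ) 1, f x = 0)
    (hsuppn : ∀ n, ∀ x ∉ Set.Ico (0:ℝ) 1, fn n x = 0)
    (hunif : TendstoUniformlyOn fn f atTop (Set.Ico (0:ℝ) 1)) :
    Tendsto (fun n => ⨅ xt ∈ Set.Ici (0:ℝ),
        ∫⁻ x, ENNReal.ofReal ((dSum x xt) ^ 2) * (‖fn n x‖₊ : ℝ≥0∞) ^ 2 ∂μplus)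
      atTop (nhds (⨅ xt ∈ Set.Ici (0:ℝ),
        ∫⁻ x, ENNReal.ofReal ((dSum x xt) ^ 2) * (‖f x‖₊ : ℝ≥0∞) ^ 2 ∂μplus)) :=
  stmt13_general f fn hfb hsupp hsuppn hunif
end
end

section
/- Let (a_k)_{k≥0} be complex numbers with ∑_{k≥0} |a_k|² < ∞, and set ĥ(t) := ∑_{k=0}^{∞} a_k χ_{[k,k+1)}(t) and ĥ_n(t) := ∑_{k=0}^{2ⁿ−1} a_k χ_{[k,k+1)}(t). Define V₀(g) := inf_{t̃ ∈ ℝ₊} ∫_{ℝ₊} (t ⊕ t̃)² |g(t)|² dt and assume V₀(ĥ) < ∞. Then the sequence (V₀(ĥ_n))_{n∈ℕ} is nondecreasing and lim_{n→∞} V₀(ĥ_n) = V₀(ĥ). -/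
open MeasureTheory Set Filter
open scoped ENNReal NNReal

noncomputable section

/-!
The partial sum `ĥₙ` is `ĥ` cut off at `2ⁿ`, so monotonicity is immediate and only
`V₀(ĥ) ≤ lim V₀(ĥₙ)` needs an argument. Fix `z` with `∫ (t ⊕ z)² |ĥ|² < ∞`. For `y ≥ 0` let `v` be
its residue modulo `2ⁿ`. The binary digits of `v` and `y` of index `≥ -n` agree, so `t ⊕ v ≤ t ⊕ y`
for `t < 2ⁿ`, while for `t ≥ 2ⁿ ≥ 2z` we have `t ⊕ v ≤ t + v ≤ 2t ≤ 4 (t ⊕ z)`. Hence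
`V₀(ĥ) ≤ ∫ (t ⊕ v)² |ĥ|² ≤ ∫_{t < 2ⁿ} (t ⊕ y)² |ĥ|² + 16 ∫_{t ≥ 2ⁿ} (t ⊕ z)² |ĥ|²`,
and the last integral, a tail of a finite integral, tends to `0`.
-/

lemma dDigit_eq_natFloor (x : ℝ) (j : ℤ) : dDigit x j = ⌊x * 2 ^ (j + 1)⌋₊ % 2 := by
  rw [dDigit, Int.floor_toNat]

lemma dDigit_mul_zpow_eq_sub (x : ℝ) (j : ℤ) :
    (dDigit x j : ℝ) * 2 ^ (-j - 1) =
      ⌊x * 2 ^ (j + 1)⌋₊ / 2 ^ (j + 1) - ⌊x * 2 ^ j⌋₊ / 2 ^ j := by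
  have hpow : (2 : ℝ) ^ (j + 1) = 2 * 2 ^ j := by rw [zpow_add_one₀ two_ne_zero, mul_comm]
  have hhalf : ⌊x * 2 ^ j⌋₊ = ⌊x * 2 ^ (j + 1)⌋₊ / 2 := by
    rw [← Nat.floor_div_ofNat, hpow]
    ring_nf
  have hsplit : (⌊x * 2 ^ (j + 1)⌋₊ : ℝ) =
      2 * (⌊x * 2 ^ (j + 1)⌋₊ / 2 : ℕ) + (⌊x * 2 ^ (j + 1)⌋₊ % 2 : ℕ) := by
    exact_mod_cast (Nat.div_add_mod _ 2).symm
  rw [dDigit_eq_natFloor, hhalf, hsplit, show -j - 1 = -(j + 1) by ring, zpow_neg, hpow]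
  field_simp
  ring

lemma tendsto_natFloor_mul_two_pow_div {x : ℝ} (hx : 0 ≤ x) :
    Tendsto (fun n : ℕ => (⌊x * 2 ^ n⌋₊ : ℝ) / 2 ^ n) atTop (nhds x) := by
  have hlow : ∀ n : ℕ, x - (1 / 2) ^ n ≤ (⌊x * 2 ^ n⌋₊ : ℝ) / 2 ^ n := fun n => by
    rw [le_div_iff₀ (by positivity), sub_mul, one_div, inv_pow, inv_mul_cancel₀ (by positivity)]
    linarith [Nat.lt_floor_add_one (x * 2 ^ n)]
  have hup : ∀ n : ℕ, (⌊x * 2 ^ n⌋₊ : ℝ) / 2 ^ n ≤ x := fun n =>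
    div_le_of_le_mul₀ (by positivity) hx (Nat.floor_le (by positivity))
  have hlim : Tendsto (fun n : ℕ => x - (1 / 2 : ℝ) ^ n) atTop (nhds x) := by
    simpa using tendsto_const_nhds.sub (tendsto_pow_atTop_nhds_zero_of_lt_one
      (by norm_num : (0 : ℝ) ≤ 1 / 2) (by norm_num))
  exact tendsto_of_tendsto_of_tendsto_of_le_of_le hlim tendsto_const_nhds hlow hup

lemma natFloor_mul_two_zpow_neg_eq_zero {x : ℝ} {n : ℕ} (hxn : x < 2 ^ n) :
    ⌊x * 2 ^ (-(n : ℤ))⌋₊ = 0 := by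
  rw [Nat.floor_eq_zero, zpow_neg, zpow_natCast, ← div_eq_mul_inv, div_lt_one (by positivity)]
  exact hxn

theorem hasSum_dDigit {x : ℝ} (hx : 0 ≤ x) :
    HasSum (fun j : ℤ => (dDigit x j : ℝ) * 2 ^ (-j - 1)) x := by
  -- `b j` is `x` truncated after its digit of weight `2⁻ʲ`; the partial sums telescope.
  set b : ℤ → ℝ := fun j => ⌊x * 2 ^ j⌋₊ / 2 ^ j
  have hstep (j : ℤ) : (dDigit x j : ℝ) * 2 ^ (-j - 1) = b (j + 1) - b j :=
    dDigit_mul_zpow_eq_sub x j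
  have hnn (j : ℤ) : 0 ≤ (dDigit x j : ℝ) * 2 ^ (-j - 1) := by positivity
  have hpos : HasSum (fun n : ℕ => (dDigit x n : ℝ) * 2 ^ (-(n : ℤ) - 1)) (x - b 0) := by
    rw [hasSum_iff_tendsto_nat_of_nonneg fun n => hnn n]
    have hsum (N : ℕ) : ∑ n ∈ Finset.range N, (dDigit x n : ℝ) * 2 ^ (-(n : ℤ) - 1) =
        b N - b 0 := by
      simp_rw [hstep]
      exact_mod_cast Finset.sum_range_sub (fun n : ℕ => b n) N
    simp_rw [hsum]
    refine Tendsto.sub ?_ tendsto_const_nhds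
    simpa [b] using tendsto_natFloor_mul_two_pow_div hx
  have hneg : HasSum (fun n : ℕ => (dDigit x (-(n + 1)) : ℝ) * 2 ^ (-(-(n + 1) : ℤ) - 1))
      (b 0) := by
    rw [hasSum_iff_tendsto_nat_of_nonneg fun n => hnn _]
    have hsum (N : ℕ) : ∑ n ∈ Finset.range N,
        (dDigit x (-(n + 1)) : ℝ) * 2 ^ (-(-(n + 1) : ℤ) - 1) = b 0 - b (-N) := by
      simp_rw [hstep, show ∀ n : ℕ, -((n : ℤ) + 1) + 1 = -n by intro n; ring]
      exact_mod_cast Finset.sum_range_sub' (fun n : ℕ => b (-n)) N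
    simp_rw [hsum]
    obtain ⟨M, hM⟩ := pow_unbounded_of_one_lt x one_lt_two
    refine tendsto_const_nhds.congr' ?_
    filter_upwards [eventually_ge_atTop M] with N hN
    have : x < 2 ^ N := hM.trans_le (pow_le_pow_right₀ one_le_two hN)
    show b 0 = b 0 - ⌊x * 2 ^ (-(N : ℤ))⌋₊ / 2 ^ (-(N : ℤ))
    rw [natFloor_mul_two_zpow_neg_eq_zero this, Nat.cast_zero, zero_div, sub_zero]
  have := hpos.of_nat_of_neg_add_one (f := fun j : ℤ => (dDigit x j : ℝ) * 2 ^ (-j - 1)) hneg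
  rwa [sub_add_cancel] at this

lemma abs_dDigit_sub_mul_le (x y : ℝ) (j : ℤ) :
    |(dDigit x j : ℝ) - dDigit y j| * 2 ^ (-j - 1) ≤
      dDigit x j * 2 ^ (-j - 1) + dDigit y j * 2 ^ (-j - 1) := by
  rw [← add_mul]
  gcongr
  exact abs_sub_le_iff.mpr ⟨by linarith [(dDigit y j).cast_nonneg (α := ℝ)],
    by linarith [(dDigit x j).cast_nonneg (α := ℝ)]⟩

lemma summable_dSum {x y : ℝ} (hx : 0 ≤ x) (hy : 0 ≤ y) :
    Summable fun j : ℤ => |(dDigit x j : ℝ) - dDigit y j| * 2 ^ (-j - 1) :=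
  ((hasSum_dDigit hx).add (hasSum_dDigit hy)).summable.of_nonneg_of_le
    (fun _ => by positivity) (abs_dDigit_sub_mul_le x y)

lemma dSum_le_add {x y : ℝ} (hx : 0 ≤ x) (hy : 0 ≤ y) : dSum x y ≤ x + y :=
  hasSum_le (abs_dDigit_sub_mul_le x y) (summable_dSum hx hy).hasSum
    ((hasSum_dDigit hx).add (hasSum_dDigit hy))

lemma sub_le_dSum {x y : ℝ} (hx : 0 ≤ x) (hy : 0 ≤ y) : x - y ≤ dSum x y :=
  hasSum_le (fun j => by rw [← sub_mul]; gcongr; exact le_abs_self _)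
    ((hasSum_dDigit hx).sub (hasSum_dDigit hy)) (summable_dSum hx hy).hasSum

lemma dDigit_eq_zero_of_lt_two_pow {x : ℝ} {n : ℕ} (hx : x < 2 ^ n) {j : ℤ}
    (hj : j < -(n : ℤ)) : dDigit x j = 0 := by
  rw [dDigit_eq_natFloor, Nat.floor_eq_zero.mpr, Nat.zero_mod]
  calc x * 2 ^ (j + 1) < 2 ^ n * 2 ^ (j + 1) := by gcongr
    _ = 2 ^ ((n : ℤ) + (j + 1)) := by rw [zpow_add₀ two_ne_zero (n : ℤ), zpow_natCast]
    _ ≤ 1 := zpow_le_one_of_nonpos₀ one_le_two (by omega)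

lemma dDigit_add_nat_mul_two_pow {x : ℝ} (hx : 0 ≤ x) (q n : ℕ) {j : ℤ} (hj : -(n : ℤ) ≤ j) :
    dDigit (x + q * 2 ^ n) j = dDigit x j := by
  obtain ⟨k, hk⟩ : ∃ k : ℕ, (n : ℤ) + (j + 1) = k + 1 := ⟨(n + j).toNat, by omega⟩
  have hshift : (x + q * 2 ^ n) * 2 ^ (j + 1) = x * 2 ^ (j + 1) + ((2 * (q * 2 ^ k) : ℕ) : ℝ) := by
    rw [add_mul, mul_assoc, ← zpow_natCast, ← zpow_add₀ two_ne_zero, hk,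
      zpow_add_one₀ two_ne_zero (k : ℤ), zpow_natCast]
    push_cast
    ring
  rw [dDigit_eq_natFloor, dDigit_eq_natFloor, hshift, Nat.floor_add_natCast (by positivity)]
  omega

lemma dSum_le_dSum_add_nat_mul_two_pow {t v : ℝ} {n : ℕ} (ht : 0 ≤ t) (htn : t < 2 ^ n)
    (hv : 0 ≤ v) (hvn : v < 2 ^ n) (q : ℕ) : dSum t v ≤ dSum t (v + q * 2 ^ n) := by
  refine (summable_dSum ht hv).tsum_le_tsum (fun j => ?_) (summable_dSum ht (by positivity))
  rcases le_or_gt (-(n : ℤ)) j with hj | hj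
  · rw [dDigit_add_nat_mul_two_pow hv q n hj]
  · rw [dDigit_eq_zero_of_lt_two_pow htn hj, dDigit_eq_zero_of_lt_two_pow hvn hj]
    simp only [Nat.cast_zero, sub_self, abs_zero, zero_mul]
    positivity

def dyadicDispersion (f : ℝ → ℂ) (y : ℝ) : ℝ≥0∞ :=
  ∫⁻ x, ENNReal.ofReal ((dSum x y) ^ 2) * (‖f x‖₊ : ℝ≥0∞) ^ 2 ∂μplus

lemma Vnum_eq_iInf (f : ℝ → ℂ) : Vnum f = ⨅ y ∈ Ici (0 : ℝ), dyadicDispersion f y := rfl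

lemma dyadicDispersion_mono {f g : ℝ → ℂ} (h : ∀ t, ‖f t‖ ≤ ‖g t‖) (y : ℝ) :
    dyadicDispersion f y ≤ dyadicDispersion g y :=
  lintegral_mono fun t => by gcongr; exact_mod_cast h t

lemma Vnum_mono {f g : ℝ → ℂ} (h : ∀ t, ‖f t‖ ≤ ‖g t‖) : Vnum f ≤ Vnum g :=
  iInf₂_mono fun y _ => dyadicDispersion_mono h y

lemma dyadicDispersion_le_mul {f : ℝ → ℂ} {y z c : ℝ}
    (h : ∀ t, 0 ≤ t → f t ≠ 0 → dSum t y ^ 2 ≤ c * dSum t z ^ 2) :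
    dyadicDispersion f y ≤ ENNReal.ofReal c * dyadicDispersion f z := by
  rw [dyadicDispersion, dyadicDispersion, ← lintegral_const_mul' _ _ ENNReal.ofReal_ne_top]
  refine lintegral_mono_ae ((ae_restrict_mem measurableSet_Ici).mono fun t ht => ?_)
  by_cases hft : f t = 0
  · simp [hft]
  rw [← mul_assoc, ← ENNReal.ofReal_mul' (sq_nonneg _)]
  gcongr
  exact h t ht hft

lemma dyadicDispersion_indicator (f : ℝ → ℂ) (y : ℝ) {s : Set ℝ} (hs : MeasurableSet s) :
    dyadicDispersion (s.indicator f) y =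
      ∫⁻ x in s, ENNReal.ofReal ((dSum x y) ^ 2) * (‖f x‖₊ : ℝ≥0∞) ^ 2 ∂μplus := by
  rw [dyadicDispersion, ← lintegral_indicator hs]
  congr 1 with x
  by_cases hx : x ∈ s <;> simp [hx]

lemma dyadicDispersion_eq_add (f : ℝ → ℂ) (y c : ℝ) :
    dyadicDispersion f y =
      dyadicDispersion ((Iio c).indicator f) y + dyadicDispersion ((Ici c).indicator f) y := by
  rw [dyadicDispersion_indicator f y measurableSet_Iio,
    dyadicDispersion_indicator f y measurableSet_Ici, ← compl_Iio,
    lintegral_add_compl _ measurableSet_Iio, dyadicDispersion]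

lemma tendsto_dyadicDispersion_indicator_Ici {f : ℝ → ℂ} {y : ℝ}
    (hf : dyadicDispersion f y ≠ ∞) :
    Tendsto (fun n : ℕ => dyadicDispersion ((Ici ((2 : ℝ) ^ n)).indicator f) y) atTop
      (nhds 0) := by
  set ν := μplus.withDensity fun x => ENNReal.ofReal ((dSum x y) ^ 2) * (‖f x‖₊ : ℝ≥0∞) ^ 2
  have hν (s : Set ℝ) (hs : MeasurableSet s) : dyadicDispersion (s.indicator f) y = ν s := by
    rw [dyadicDispersion_indicator f y hs, withDensity_apply _ hs]
  have hempty : ⋂ n : ℕ, Ici ((2 : ℝ) ^ n) = ∅ := by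
    refine eq_empty_of_forall_notMem fun x hx => ?_
    obtain ⟨n, hn⟩ := pow_unbounded_of_one_lt x one_lt_two
    exact hn.not_ge (mem_iInter.mp hx n)
  have hanti : Antitone fun n : ℕ => Ici ((2 : ℝ) ^ n) :=
    fun m n hmn => Ici_subset_Ici.mpr (pow_le_pow_right₀ one_le_two hmn)
  have hfin : ν (Ici ((2 : ℝ) ^ 0)) ≠ ∞ := by
    rw [← hν _ measurableSet_Ici]
    exact ne_top_of_le_ne_top hf
      (dyadicDispersion_mono (fun t => norm_indicator_le_norm_self f t) y)
  have := tendsto_measure_iInter_atTop (fun n => measurableSet_Ici.nullMeasurableSet) hanti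
    ⟨0, hfin⟩
  rw [hempty, measure_empty] at this
  simp_rw [hν _ measurableSet_Ici]
  exact this

lemma Vnum_le_dyadicDispersion_add {f : ℝ → ℂ} {n : ℕ} {y z : ℝ} (hy : 0 ≤ y) (hz : 0 ≤ z)
    (hzn : 2 * z ≤ 2 ^ n) :
    Vnum f ≤ dyadicDispersion ((Iio ((2 : ℝ) ^ n)).indicator f) y +
      16 * dyadicDispersion ((Ici ((2 : ℝ) ^ n)).indicator f) z := by
  set q := ⌊y / 2 ^ n⌋₊
  set v := y - q * 2 ^ n
  have hv : 0 ≤ v := by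
    have := Nat.floor_le (div_nonneg hy (pow_nonneg zero_le_two n))
    rw [le_div_iff₀ (by positivity)] at this
    linarith
  have hvn : v < 2 ^ n := by
    have := Nat.lt_floor_add_one (y / 2 ^ n)
    rw [div_lt_iff₀ (by positivity)] at this
    linarith
  have hlow : dyadicDispersion ((Iio ((2 : ℝ) ^ n)).indicator f) v ≤
      dyadicDispersion ((Iio ((2 : ℝ) ^ n)).indicator f) y := by
    simpa using dyadicDispersion_le_mul (c := 1) fun t ht hft => by
      have htn : t < 2 ^ n := by_contra fun h => hft (indicator_of_notMem (s := Iio _) h f)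
      have := dSum_le_dSum_add_nat_mul_two_pow ht htn hv hvn q
      rw [sub_add_cancel] at this
      rw [one_mul]
      exact pow_le_pow_left₀ (dSum_nonneg t v) this 2
  have hhigh : dyadicDispersion ((Ici ((2 : ℝ) ^ n)).indicator f) v ≤
      16 * dyadicDispersion ((Ici ((2 : ℝ) ^ n)).indicator f) z := by
    simpa using dyadicDispersion_le_mul (c := 16) fun t ht hft => by
      have htn : 2 ^ n ≤ t := by_contra fun h => hft (indicator_of_notMem (s := Ici _) h f)
      have h1 := dSum_le_add ht hv
      have h2 := sub_le_dSum ht hz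
      nlinarith [dSum_nonneg t v]
  calc Vnum f ≤ dyadicDispersion f v := iInf₂_le v hv
    _ = _ := dyadicDispersion_eq_add f v (2 ^ n)
    _ ≤ _ := add_le_add hlow hhigh

theorem monotone_Vnum_indicator_Iio_two_pow (f : ℝ → ℂ) :
    Monotone fun n : ℕ => Vnum ((Iio ((2 : ℝ) ^ n)).indicator f) := fun _ _ hmn =>
  Vnum_mono fun t => norm_indicator_le_of_subset
    (Iio_subset_Iio (pow_le_pow_right₀ one_le_two hmn)) f t

theorem tendsto_Vnum_indicator_Iio_two_pow {f : ℝ → ℂ} (hf : Vnum f ≠ ∞) :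
    Tendsto (fun n : ℕ => Vnum ((Iio ((2 : ℝ) ^ n)).indicator f)) atTop (nhds (Vnum f)) := by
  set V := fun n : ℕ => Vnum ((Iio ((2 : ℝ) ^ n)).indicator f)
  have hmono : Monotone V := monotone_Vnum_indicator_Iio_two_pow f
  suffices hsup : ⨆ n, V n = Vnum f from hsup ▸ tendsto_atTop_iSup hmono
  refine le_antisymm (iSup_le fun n => Vnum_mono fun t => norm_indicator_le_norm_self f t) ?_
  obtain ⟨z, hz, hzf⟩ : ∃ z ∈ Ici (0 : ℝ), dyadicDispersion f z < ∞ := by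
    simpa [Vnum_eq_iInf, iInf_lt_iff] using hf.lt_top
  obtain ⟨N, hN⟩ := pow_unbounded_of_one_lt (2 * z) one_lt_two
  have hbound : ∀ᶠ n in atTop, Vnum f ≤
      (⨆ m, V m) + 16 * dyadicDispersion ((Ici ((2 : ℝ) ^ n)).indicator f) z := by
    filter_upwards [eventually_ge_atTop N] with n hn
    have hzn : 2 * z ≤ 2 ^ n := hN.le.trans (pow_le_pow_right₀ one_le_two hn)
    calc Vnum f ≤ V n + 16 * dyadicDispersion ((Ici ((2 : ℝ) ^ n)).indicator f) z := by
          show _ ≤ Vnum ((Iio ((2 : ℝ) ^ n)).indicator f) + _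
          rw [Vnum_eq_iInf ((Iio _).indicator f), ENNReal.iInf₂_add]
          exact le_iInf₂ fun y hy => Vnum_le_dyadicDispersion_add hy hz hzn
      _ ≤ _ := by gcongr; exact le_iSup V n
  have htail := tendsto_dyadicDispersion_indicator_Ici hzf.ne
  have := ge_of_tendsto
    ((ENNReal.Tendsto.const_mul htail (Or.inr ENNReal.ofNat_ne_top)).const_add (⨆ m, V m)) hbound
  simpa using this

lemma mem_Ico_natCast_iff {t : ℝ} {k : ℕ} : t ∈ Ico (k : ℝ) (k + 1) ↔ 0 ≤ t ∧ ⌊t⌋₊ = k := by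
  refine ⟨fun h => ?_, fun ⟨ht, hk⟩ => (Nat.floor_eq_iff ht).mp hk⟩
  have ht : 0 ≤ t := k.cast_nonneg.trans h.1
  exact ⟨ht, (Nat.floor_eq_iff ht).mpr h⟩

lemma sum_range_mul_indicator_Ico (a : ℕ → ℂ) (N : ℕ) (t : ℝ) :
    ∑ k ∈ Finset.range N, a k * (Ico (k : ℝ) (k + 1)).indicator (fun _ => 1) t =
      (Iio (N : ℝ)).indicator
        (fun t => ∑' k : ℕ, a k * (Ico (k : ℝ) (k + 1)).indicator (fun _ => 1) t) t := by
  simp only [indicator_apply, mem_Ico_natCast_iff, mul_ite, mul_one, mul_zero, mem_Iio]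
  by_cases ht : 0 ≤ t
  · simp [ht, Nat.floor_lt ht]
  · simp [ht]

theorem stmt14_general (a : ℕ → ℂ)
    (hfin : (⨅ tt ∈ Set.Ici (0:ℝ), ∫⁻ t, ENNReal.ofReal ((dSum t tt) ^ 2) *
        (‖∑' k : ℕ, a k * Set.indicator (Set.Ico (k : ℝ) ((k : ℝ) + 1)) (fun _ => (1:ℂ)) t‖₊ : ℝ≥0∞) ^ 2
        ∂μplus) ≠ ∞) :
    Monotone (fun n : ℕ => ⨅ tt ∈ Set.Ici (0:ℝ), ∫⁻ t, ENNReal.ofReal ((dSum t tt) ^ 2) *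
        (‖∑ k ∈ Finset.range (2 ^ n),
            a k * Set.indicator (Set.Ico (k : ℝ) ((k : ℝ) + 1)) (fun _ => (1:ℂ)) t‖₊ : ℝ≥0∞) ^ 2
        ∂μplus) ∧
    Tendsto (fun n : ℕ => ⨅ tt ∈ Set.Ici (0:ℝ), ∫⁻ t, ENNReal.ofReal ((dSum t tt) ^ 2) *
        (‖∑ k ∈ Finset.range (2 ^ n),
            a k * Set.indicator (Set.Ico (k : ℝ) ((k : ℝ) + 1)) (fun _ => (1:ℂ)) t‖₊ : ℝ≥0∞) ^ 2
        ∂μplus)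
      atTop
      (nhds (⨅ tt ∈ Set.Ici (0:ℝ), ∫⁻ t, ENNReal.ofReal ((dSum t tt) ^ 2) *
        (‖∑' k : ℕ, a k * Set.indicator (Set.Ico (k : ℝ) ((k : ℝ) + 1)) (fun _ => (1:ℂ)) t‖₊ : ℝ≥0∞) ^ 2
        ∂μplus)) := by
  simp only [sum_range_mul_indicator_Ico, Nat.cast_pow, Nat.cast_ofNat]
  exact ⟨monotone_Vnum_indicator_Iio_two_pow _, tendsto_Vnum_indicator_Iio_two_pow hfin⟩

/-- for square-summable `(a_k)`, `ĥ = ∑_{k≥0} a_k χ_{[k,k+1)}` and its partial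
sums `ĥₙ = ∑_{k<2ⁿ} a_k χ_{[k,k+1)}`, if `V₀(ĥ) = inf_{t̃∈ℝ₊} ∫ (t ⊕ t̃)² |ĥ|² < ∞`, then
`(V₀(ĥₙ))ₙ` is nondecreasing and converges to `V₀(ĥ)`. -/
theorem stmt14 (a : ℕ → ℂ) (ha : Summable fun k => ‖a k‖ ^ 2)
    (hfin : (⨅ tt ∈ Set.Ici (0:ℝ), ∫⁻ t, ENNReal.ofReal ((dSum t tt) ^ 2) *
        (‖∑' k : ℕ, a k * Set.indicator (Set.Ico (k : ℝ) ((k : ℝ) + 1)) (fun _ => (1:ℂ)) t‖₊ : ℝ≥0∞) ^ 2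
        ∂μplus) ≠ ∞) :
    Monotone (fun n : ℕ => ⨅ tt ∈ Set.Ici (0:ℝ), ∫⁻ t, ENNReal.ofReal ((dSum t tt) ^ 2) *
        (‖∑ k ∈ Finset.range (2 ^ n),
            a k * Set.indicator (Set.Ico (k : ℝ) ((k : ℝ) + 1)) (fun _ => (1:ℂ)) t‖₊ : ℝ≥0∞) ^ 2
        ∂μplus) ∧
    Tendsto (fun n : ℕ => ⨅ tt ∈ Set.Ici (0:ℝ), ∫⁻ t, ENNReal.ofReal ((dSum t tt) ^ 2) *
        (‖∑ k ∈ Finset.range (2 ^ n),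
            a k * Set.indicator (Set.Ico (k : ℝ) ((k : ℝ) + 1)) (fun _ => (1:ℂ)) t‖₊ : ℝ≥0∞) ^ 2
        ∂μplus)
      atTop
      (nhds (⨅ tt ∈ Set.Ici (0:ℝ), ∫⁻ t, ENNReal.ofReal ((dSum t tt) ^ 2) *
        (‖∑' k : ℕ, a k * Set.indicator (Set.Ico (k : ℝ) ((k : ℝ) + 1)) (fun _ => (1:ℂ)) t‖₊ : ℝ≥0∞) ^ 2
        ∂μplus)) :=
  stmt14_general a hfin
end
end
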